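/- arXiv:1011.6018 — 2 statements merged into one kernel-verified Lean document; each statement's English description precedes it below -/
import Mathlib

section
/- For every natural number n and every complex number x, the identity ∑_{k=0}^{n} C(n,k) · C(n+k,k) · (-1)^{n-k} · (1+x)^k = ∑_{k=0}^{n} C(n,k) · C(n+k,k) · x^k holds, where C(a,b) denotes the ordinary binomial coefficient. -/
/-!
Both sides are values of the shifted Legendre polynomial
`Pₙ(t) = ∑ₖ (-1)ᵏ C(n,k) C(n+k,k) tᵏ`: the right-hand side is `Pₙ(-x)` and the left-hand side
is `(-1)ⁿ Pₙ(1 + x)`, so the identity is the reflection symmetry `Pₙ(t) = (-1)ⁿ Pₙ(1 - t)`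
at `t = -x`, which Rodrigues' formula `n! Pₙ = (d/dt)ⁿ (tⁿ (1 - t)ⁿ)` makes evident.
-/

open Finset Polynomial

theorem Polynomial.aeval_shiftedLegendre {R : Type*} [Ring R] (n : ℕ) (y : R) :
    aeval y (shiftedLegendre n) =
      ∑ k ∈ range (n + 1), (n.choose k : R) * ((n + k).choose k : R) * (-y) ^ k := by
  simp only [shiftedLegendre, map_sum, map_mul, map_pow, map_neg, map_one, map_natCast, aeval_X]
  refine sum_congr rfl fun k _ => ?_
  rw [Nat.choose_symm_add]
  rcases k.even_or_odd with hk | hk <;> simp [hk.neg_pow]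

theorem neg_one_pow_sub_mul_pow {R : Type*} [Ring R] {k n : ℕ} (h : k ≤ n) (y : R) :
    (-1) ^ (n - k) * y ^ k = (-1) ^ n * (-y) ^ k := by
  obtain ⟨m, rfl⟩ := exists_add_of_le h
  rw [Nat.add_sub_cancel_left, neg_pow y, ← mul_assoc, ← pow_add, add_comm k m, add_assoc,
    pow_add, Even.neg_one_pow ⟨k, rfl⟩, mul_one]

/-- Simons' identity: for every natural number `n` and complex number `x`,
`∑_{k=0}^n C(n,k) C(n+k,k) (-1)^(n-k) (1+x)^k = ∑_{k=0}^n C(n,k) C(n+k,k) x^k`. -/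
theorem simons_identity (n : ℕ) (x : ℂ) :
    ∑ k ∈ Finset.range (n + 1),
        (n.choose k : ℂ) * ((n + k).choose k : ℂ) * (-1 : ℂ) ^ (n - k) * (1 + x) ^ k
      = ∑ k ∈ Finset.range (n + 1),
        (n.choose k : ℂ) * ((n + k).choose k : ℂ) * x ^ k := by
  calc _ = (-1) ^ n * aeval (1 + x) (shiftedLegendre n) := by
        rw [aeval_shiftedLegendre, mul_sum]
        refine sum_congr rfl fun k hk => ?_
        rw [mul_assoc, neg_one_pow_sub_mul_pow (Nat.le_of_lt_succ (mem_range.1 hk))]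
        ring
    _ = aeval (-x) (shiftedLegendre n) := by
        rw [shiftedLegendre_eval_symm n (-x), sub_neg_eq_add]
    _ = _ := by simp_rw [aeval_shiftedLegendre, neg_neg]
end

section
/- For every natural number n and all complex numbers α, β, x, y, the identity ∑_{k=0}^{n} C(β−α+n, n−k) · C(β+k, k) · (−1)^{n−k} · (x+y)^k · y^{n−k} = ∑_{k=0}^{n} C(α, n−k) · C(β+k, k) · x^k · y^{n−k} holds, where C(z, j) for a complex number z and a natural number j denotes the generalized binomial coefficient z(z−1)⋯(z−j+1)/j!. -/
/-!
The identity holds in every commutative binomial ring. Expanding `(x + y) ^ k` and comparing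
coefficients of `x ^ j * y ^ (n - j)` reduces it to
`∑ₖ C(β-α+n, n-k) C(β+k, k) (-1)^(n-k) C(k, j) = C(α, n-j) C(β+j, j)`.
Upper negation `C(β+k, k) = (-1)^k C(-β-1, k)` followed by trinomial revision
`C(-β-1, k) C(k, j) = C(-β-1, j) C(-β-1-j, k-j)` turns the left side into `(-1)^(n-j) C(β+j, j)`
times a Chu–Vandermonde sum, which equals `C(n-j-1-α, n-j) = (-1)^(n-j) C(α, n-j)`.
-/

noncomputable def cbinom (z : ℂ) (j : ℕ) : ℂ :=
  (∏ i ∈ Finset.range j, (z - (i : ℂ))) / (j.factorial : ℂ)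

open Finset

theorem sum_mul_add_pow_mul_pow {S : Type*} [CommSemiring S] (c : ℕ → S) (n : ℕ) (x y : S) :
    ∑ k ∈ range (n + 1), c k * (x + y) ^ k * y ^ (n - k)
      = ∑ j ∈ range (n + 1), (∑ k ∈ Ico j (n + 1), c k * k.choose j) * x ^ j * y ^ (n - j) := by
  calc ∑ k ∈ range (n + 1), c k * (x + y) ^ k * y ^ (n - k)
      = ∑ k ∈ Ico 0 (n + 1), ∑ j ∈ Ico 0 (k + 1), c k * k.choose j * x ^ j * y ^ (n - j) := by
        rw [range_eq_Ico]
        refine sum_congr rfl fun k hk => ?_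
        rw [add_pow, mul_sum, sum_mul, range_eq_Ico]
        refine sum_congr rfl fun j hj => ?_
        have hjk : j ≤ k := Nat.lt_succ_iff.mp (mem_Ico.mp hj).2
        have hkn : k ≤ n := Nat.lt_succ_iff.mp (mem_Ico.mp hk).2
        rw [show n - j = (k - j) + (n - k) by omega, pow_add]
        ring
    _ = ∑ j ∈ range (n + 1), (∑ k ∈ Ico j (n + 1), c k * k.choose j) * x ^ j * y ^ (n - j) := by
        rw [← sum_Ico_Ico_comm, range_eq_Ico]
        simp only [sum_mul]

namespace Ring

variable {R : Type*} [CommRing R] [BinomialRing R]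

theorem choose_natCast_sub_one_sub (a : R) (n : ℕ) :
    choose ((n : R) - 1 - a) n = (-1) ^ n * choose a n := by
  rw [show (n : R) - 1 - a = -(a - n + 1) by ring, choose_neg, Units.smul_def, zsmul_eq_mul,
    Int.cast_negOnePow_natCast]
  congr 2
  ring

theorem choose_add_natCast_mul_choose (b : R) {j k : ℕ} (hjk : j ≤ k) :
    choose (b + k) k * k.choose j
      = (-1) ^ (k - j) * choose (b + j) j * choose (-b - 1 - j) (k - j) := by
  have reflect (i : ℕ) : choose (b + i) i = (-1) ^ i * choose (-b - 1) i := by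
    rw [← choose_natCast_sub_one_sub]
    ring_nf
  have trinomial := choose_smul_choose (-b - 1) hjk
  rw [nsmul_eq_mul] at trinomial
  rw [reflect, reflect, mul_assoc, mul_comm _ (k.choose j : R), trinomial,
    ← Nat.sub_add_cancel hjk, pow_add, Nat.add_sub_cancel]
  ring

theorem sum_Ico_choose_mul_choose (r s : R) {j n : ℕ} (hjn : j ≤ n) :
    ∑ k ∈ Ico j (n + 1), choose r (k - j) * choose s (n - k) = choose (r + s) (n - j) := by
  rw [add_choose_eq _ (Commute.all r s),
    Nat.sum_antidiagonal_eq_sum_range_succ (fun a b => choose r a * choose s b),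
    sum_Ico_eq_sum_range, Nat.sub_add_comm hjn]
  refine sum_congr rfl fun m _ => ?_
  rw [Nat.add_sub_cancel_left, Nat.sub_sub]

theorem sum_choose_mul_choose_mul_neg_one_pow_mul_choose (a b : R) {j n : ℕ} (hjn : j ≤ n) :
    ∑ k ∈ Ico j (n + 1),
        choose (b - a + n) (n - k) * choose (b + k) k * (-1) ^ (n - k) * k.choose j
      = choose a (n - j) * choose (b + j) j := by
  have term : ∀ k ∈ Ico j (n + 1),
      choose (b - a + n) (n - k) * choose (b + k) k * (-1) ^ (n - k) * k.choose j
        = (-1) ^ (n - j) * choose (b + j) j *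
            (choose (-b - 1 - j) (k - j) * choose (b - a + n) (n - k)) := by
    intro k hk
    have hjk : j ≤ k := (mem_Ico.mp hk).1
    have hkn : k ≤ n := Nat.lt_succ_iff.mp (mem_Ico.mp hk).2
    have hpow : (-1 : R) ^ (n - k) * (-1) ^ (k - j) = (-1) ^ (n - j) := by
      rw [← pow_add]
      congr 1
      omega
    linear_combination
      choose (b - a + n) (n - k) * (-1) ^ (n - k) * choose_add_natCast_mul_choose b hjk
        + choose (b - a + n) (n - k) * choose (b + j) j * choose (-b - 1 - j) (k - j) * hpow
  have vandermonde : choose (-b - 1 - j + (b - a + n)) (n - j)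
      = (-1) ^ (n - j) * choose a (n - j) := by
    rw [← choose_natCast_sub_one_sub, Nat.cast_sub hjn]
    ring_nf
  have hsign : (-1 : R) ^ (n - j) * (-1) ^ (n - j) = 1 := by
    rw [← pow_add]
    exact Even.neg_one_pow ⟨n - j, rfl⟩
  rw [sum_congr rfl term, ← mul_sum, sum_Ico_choose_mul_choose _ _ hjn, vandermonde]
  linear_combination choose a (n - j) * choose (b + j) j * hsign

theorem munarini (n : ℕ) (a b x y : R) :
    ∑ k ∈ range (n + 1),
        choose (b - a + n) (n - k) * choose (b + k) k * (-1) ^ (n - k) * (x + y) ^ k * y ^ (n - k)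
      = ∑ k ∈ range (n + 1), choose a (n - k) * choose (b + k) k * x ^ k * y ^ (n - k) := by
  rw [sum_mul_add_pow_mul_pow
    (fun k => choose (b - a + n) (n - k) * choose (b + k) k * (-1) ^ (n - k))]
  refine sum_congr rfl fun j hj => ?_
  rw [sum_choose_mul_choose_mul_neg_one_pow_mul_choose a b
    (Nat.lt_succ_iff.mp (mem_range.mp hj))]

end Ring

theorem cbinom_eq_choose (z : ℂ) (j : ℕ) : cbinom z j = Ring.choose z j := by
  rw [Ring.choose_eq_smul, smul_eq_mul, cbinom, div_eq_inv_mul,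
    ← descPochhammer_eval_eq_prod_range, ← descPochhammer_map (algebraMap ℤ ℂ),
    Polynomial.eval_map_algebraMap, Polynomial.aeval_eq_smeval]

/-- Munarini's identity. -/
theorem munarini_identity (n : ℕ) (α β x y : ℂ) :
    ∑ k ∈ Finset.range (n + 1),
        cbinom (β - α + (n : ℂ)) (n - k) * cbinom (β + (k : ℂ)) k *
          (-1 : ℂ) ^ (n - k) * (x + y) ^ k * y ^ (n - k)
      = ∑ k ∈ Finset.range (n + 1),
        cbinom α (n - k) * cbinom (β + (k : ℂ)) k * x ^ k * y ^ (n - k) := by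
  simp only [cbinom_eq_choose]
  exact Ring.munarini n α β x y
end
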